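/- For every undirected social network G there exists A ⊆ V with R_IE(A, 1/2) ≥ 0.8857 · R_max(G), and for every directed social network G there exists A ⊆ V with R_IE(A, 1/2) ≥ 0.4594 · R_max(G). That is, the best Influence-and-Exploit strategy with the myopic pricing probability 1/2 extracts at least a 0.8857 (resp. 0.4594) fraction of the maximum revenue in the undirected (resp. directed) case. -/
import Mathlib


open Finset

/-- The revenue of a marketing strategy `(π, p)`:
`R(π, p) = Σ_j p_j (1 - p_j) (w_jj + Σ_{i : π(i) < π(j)} p_i w_ij)`. -/
noncomputable def revenue {V : Type} [Fintype V] [DecidableEq V]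
    (w : V → V → ℝ) (π : V ≃ Fin (Fintype.card V)) (p : V → ℝ) : ℝ :=
  ∑ j, p j * (1 - p j) *
    (w j j + ∑ i ∈ univ.filter (fun i => π i < π j), p i * w i j)

/-- The maximum revenue of a social network. -/
noncomputable def maxRev {V : Type} [Fintype V] [DecidableEq V]
    (w : V → V → ℝ) : ℝ :=
  sSup {r | ∃ (π : V ≃ Fin (Fintype.card V)) (p : V → ℝ),
    (∀ i, 1/2 ≤ p i ∧ p i ≤ 1) ∧ r = revenue w π p}

/-- The expected revenue of `IE(A, p)` on an undirected social network. -/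
noncomputable def ieRev {V : Type} [Fintype V] [DecidableEq V]
    (w : V → V → ℝ) (A : Finset V) (p : ℝ) : ℝ :=
  p * (1 - p) * ∑ i ∈ Aᶜ,
    (w i i + ∑ j ∈ A, w j i + (p / 2) * ∑ j ∈ Aᶜ \ {i}, w j i)

/-- The expected revenue of `IE(A, p)` on a directed social network. -/
noncomputable def dieRev {V : Type} [Fintype V] [DecidableEq V]
    (w : V → V → ℝ) (A : Finset V) (p : ℝ) : ℝ :=
  p * (1 - p) * ∑ j ∈ Aᶜ,
    (∑ i ∈ A, w i j + (p / 2) * ∑ i ∈ Aᶜ \ {j}, w i j)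


open Finset

/-! ### Auxiliary polynomial inequalities -/

/-- Seeding probability for the undirected case. -/
noncomputable def bieQ (p : ℝ) : ℝ := (79/200)*(2*p-1) + (27/50)*(2*p-1)^2

/-- Seeding probability for the directed case. -/
noncomputable def bieQD (p : ℝ) : ℝ := 1 - 3*(p*(1-p))

lemma bieQ_bounds {y : ℝ} (h1 : 1/2 ≤ y) (h2 : y ≤ 1) : 0 ≤ bieQ y ∧ bieQ y ≤ 1 := by
  unfold bieQ; constructor <;> nlinarith [sq_nonneg (2*y-1), sq_nonneg (y-1)]

lemma bieQD_bounds {y : ℝ} (h1 : 1/2 ≤ y) (h2 : y ≤ 1) : 0 ≤ bieQD y ∧ bieQD y ≤ 1 := by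
  unfold bieQD; constructor <;> nlinarith [sq_nonneg (2*y-1)]

lemma bieQ_node {y : ℝ} (h1 : 1/2 ≤ y) (h2 : y ≤ 1) :
    (8857/2500)*(y*(1-y)) ≤ 1 - bieQ y := by
  unfold bieQ; nlinarith [sq_nonneg (2*y - 1 - 5713/10000)]

lemma bieQ_edge {x y : ℝ} (hx1 : 1/2 ≤ x) (hx2 : x ≤ 1) (hy1 : 1/2 ≤ y) (hy2 : y ≤ 1) :
    (8857/2500)*(x*y*(1-y)) ≤
      bieQ x + bieQ y - 2*(bieQ x)*(bieQ y) + (1/2)*(1-bieQ x)*(1-bieQ y) := by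
  rcases le_or_gt x (3/4) with hx3 | hx3
  · unfold bieQ
    nlinarith [sq_nonneg (2*x - 1 - 45435/100000), mul_nonneg (sub_nonneg.2 hy1) (sub_nonneg.2 hy2),
      mul_nonneg (mul_nonneg (sub_nonneg.2 hx1) (sub_nonneg.2 hx3)) (sub_nonneg.2 hy1),
      mul_nonneg (mul_nonneg (sub_nonneg.2 hx1) (sub_nonneg.2 hx3)) (mul_nonneg (sub_nonneg.2 hy1) (sub_nonneg.2 hy2)),
      mul_nonneg (sub_nonneg.2 hx3) (sub_nonneg.2 hy1), sq_nonneg ((2*x-1)*(2*y-1))]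
  · have hx3' : 3/4 ≤ x := le_of_lt hx3
    rcases le_or_gt y (7/10) with hy3 | hy3
    · unfold bieQ
      have h1 : (0:ℝ) ≤ x - 3/4 := by linarith
      have h2 : (0:ℝ) ≤ 1 - x := by linarith
      have h3 : (0:ℝ) ≤ y - 1/2 := by linarith
      have h4 : (0:ℝ) ≤ 7/10 - y := by linarith
      linarith [mul_nonneg (mul_nonneg (mul_nonneg (pow_nonneg h1 0) (pow_nonneg h2 5)) (pow_nonneg h3 0)) (pow_nonneg h4 5),
    mul_nonneg (mul_nonneg (mul_nonneg (pow_nonneg h1 0) (pow_nonneg h2 5)) (pow_nonneg h3 1)) (pow_nonneg h4 4),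
    mul_nonneg (mul_nonneg (mul_nonneg (pow_nonneg h1 0) (pow_nonneg h2 5)) (pow_nonneg h3 2)) (pow_nonneg h4 3),
    mul_nonneg (mul_nonneg (mul_nonneg (pow_nonneg h1 0) (pow_nonneg h2 5)) (pow_nonneg h3 3)) (pow_nonneg h4 2),
    mul_nonneg (mul_nonneg (mul_nonneg (pow_nonneg h1 0) (pow_nonneg h2 5)) (pow_nonneg h3 4)) (pow_nonneg h4 1),
    mul_nonneg (mul_nonneg (mul_nonneg (pow_nonneg h1 0) (pow_nonneg h2 5)) (pow_nonneg h3 5)) (pow_nonneg h4 0),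
    mul_nonneg (mul_nonneg (mul_nonneg (pow_nonneg h1 1) (pow_nonneg h2 4)) (pow_nonneg h3 0)) (pow_nonneg h4 5),
    mul_nonneg (mul_nonneg (mul_nonneg (pow_nonneg h1 1) (pow_nonneg h2 4)) (pow_nonneg h3 1)) (pow_nonneg h4 4),
    mul_nonneg (mul_nonneg (mul_nonneg (pow_nonneg h1 1) (pow_nonneg h2 4)) (pow_nonneg h3 2)) (pow_nonneg h4 3),
    mul_nonneg (mul_nonneg (mul_nonneg (pow_nonneg h1 1) (pow_nonneg h2 4)) (pow_nonneg h3 3)) (pow_nonneg h4 2),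
    mul_nonneg (mul_nonneg (mul_nonneg (pow_nonneg h1 1) (pow_nonneg h2 4)) (pow_nonneg h3 4)) (pow_nonneg h4 1),
    mul_nonneg (mul_nonneg (mul_nonneg (pow_nonneg h1 1) (pow_nonneg h2 4)) (pow_nonneg h3 5)) (pow_nonneg h4 0),
    mul_nonneg (mul_nonneg (mul_nonneg (pow_nonneg h1 2) (pow_nonneg h2 3)) (pow_nonneg h3 0)) (pow_nonneg h4 5),
    mul_nonneg (mul_nonneg (mul_nonneg (pow_nonneg h1 2) (pow_nonneg h2 3)) (pow_nonneg h3 1)) (pow_nonneg h4 4),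
    mul_nonneg (mul_nonneg (mul_nonneg (pow_nonneg h1 2) (pow_nonneg h2 3)) (pow_nonneg h3 2)) (pow_nonneg h4 3),
    mul_nonneg (mul_nonneg (mul_nonneg (pow_nonneg h1 2) (pow_nonneg h2 3)) (pow_nonneg h3 3)) (pow_nonneg h4 2),
    mul_nonneg (mul_nonneg (mul_nonneg (pow_nonneg h1 2) (pow_nonneg h2 3)) (pow_nonneg h3 4)) (pow_nonneg h4 1),
    mul_nonneg (mul_nonneg (mul_nonneg (pow_nonneg h1 2) (pow_nonneg h2 3)) (pow_nonneg h3 5)) (pow_nonneg h4 0),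
    mul_nonneg (mul_nonneg (mul_nonneg (pow_nonneg h1 3) (pow_nonneg h2 2)) (pow_nonneg h3 0)) (pow_nonneg h4 5),
    mul_nonneg (mul_nonneg (mul_nonneg (pow_nonneg h1 3) (pow_nonneg h2 2)) (pow_nonneg h3 1)) (pow_nonneg h4 4),
    mul_nonneg (mul_nonneg (mul_nonneg (pow_nonneg h1 3) (pow_nonneg h2 2)) (pow_nonneg h3 2)) (pow_nonneg h4 3),
    mul_nonneg (mul_nonneg (mul_nonneg (pow_nonneg h1 3) (pow_nonneg h2 2)) (pow_nonneg h3 3)) (pow_nonneg h4 2),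
    mul_nonneg (mul_nonneg (mul_nonneg (pow_nonneg h1 3) (pow_nonneg h2 2)) (pow_nonneg h3 4)) (pow_nonneg h4 1),
    mul_nonneg (mul_nonneg (mul_nonneg (pow_nonneg h1 3) (pow_nonneg h2 2)) (pow_nonneg h3 5)) (pow_nonneg h4 0),
    mul_nonneg (mul_nonneg (mul_nonneg (pow_nonneg h1 4) (pow_nonneg h2 1)) (pow_nonneg h3 0)) (pow_nonneg h4 5),
    mul_nonneg (mul_nonneg (mul_nonneg (pow_nonneg h1 4) (pow_nonneg h2 1)) (pow_nonneg h3 1)) (pow_nonneg h4 4),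
    mul_nonneg (mul_nonneg (mul_nonneg (pow_nonneg h1 4) (pow_nonneg h2 1)) (pow_nonneg h3 2)) (pow_nonneg h4 3),
    mul_nonneg (mul_nonneg (mul_nonneg (pow_nonneg h1 4) (pow_nonneg h2 1)) (pow_nonneg h3 3)) (pow_nonneg h4 2),
    mul_nonneg (mul_nonneg (mul_nonneg (pow_nonneg h1 4) (pow_nonneg h2 1)) (pow_nonneg h3 4)) (pow_nonneg h4 1),
    mul_nonneg (mul_nonneg (mul_nonneg (pow_nonneg h1 4) (pow_nonneg h2 1)) (pow_nonneg h3 5)) (pow_nonneg h4 0),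
    mul_nonneg (mul_nonneg (mul_nonneg (pow_nonneg h1 5) (pow_nonneg h2 0)) (pow_nonneg h3 0)) (pow_nonneg h4 5),
    mul_nonneg (mul_nonneg (mul_nonneg (pow_nonneg h1 5) (pow_nonneg h2 0)) (pow_nonneg h3 1)) (pow_nonneg h4 4),
    mul_nonneg (mul_nonneg (mul_nonneg (pow_nonneg h1 5) (pow_nonneg h2 0)) (pow_nonneg h3 2)) (pow_nonneg h4 3),
    mul_nonneg (mul_nonneg (mul_nonneg (pow_nonneg h1 5) (pow_nonneg h2 0)) (pow_nonneg h3 3)) (pow_nonneg h4 2),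
    mul_nonneg (mul_nonneg (mul_nonneg (pow_nonneg h1 5) (pow_nonneg h2 0)) (pow_nonneg h3 4)) (pow_nonneg h4 1),
    mul_nonneg (mul_nonneg (mul_nonneg (pow_nonneg h1 5) (pow_nonneg h2 0)) (pow_nonneg h3 5)) (pow_nonneg h4 0)]
    · have hy3' : 7/10 ≤ y := le_of_lt hy3
      unfold bieQ
      nlinarith [sq_nonneg (y - 72375/100000), mul_nonneg (sub_nonneg.2 hx3') (sub_nonneg.2 hx2),
        mul_nonneg (mul_nonneg (sub_nonneg.2 hx3') (sub_nonneg.2 hx2)) (sub_nonneg.2 hy3'),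
        mul_nonneg (sub_nonneg.2 hx2) (sub_nonneg.2 hy3'),
        mul_nonneg (sub_nonneg.2 hy3') (sub_nonneg.2 hy2),
        mul_nonneg (sub_nonneg.2 hx2) (mul_nonneg (sub_nonneg.2 hy3') (sub_nonneg.2 hy2)),
        mul_nonneg (sub_nonneg.2 hx2) (sq_nonneg (y - 72375/100000))]

lemma bieQD_edge {x y : ℝ} (hx1 : 1/2 ≤ x) (hx2 : x ≤ 1) (hy1 : 1/2 ≤ y) (hy2 : y ≤ 1) :
    (4594/10000)*(x*(y*(1-y))) ≤
      (1/4)*(bieQD x*(1-bieQD y)) + (1/16)*((1-bieQD x)*(1-bieQD y)) := by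
  unfold bieQD
  have hs : (0:ℝ) ≤ y*(1-y) := by nlinarith
  have h1 : (0:ℝ) ≤ (3/4)*(1-(9/4)*(x*(1-x))) - (4594/10000)*x := by nlinarith [sq_nonneg (2*x-1)]
  nlinarith [mul_nonneg h1 hs]

/-! ### Random-subset machinery -/

section RandomSubset

variable {V : Type} [Fintype V] [DecidableEq V]

/-- membership indicator -/
noncomputable def bieChi (A : Finset V) (i : V) : ℝ := if i ∈ A then 1 else 0

/-- product measure on subsets -/
noncomputable def bieMu (q : V → ℝ) (A : Finset V) : ℝ :=
  (∏ i ∈ A, q i) * (∏ i ∈ Aᶜ, (1 - q i))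

lemma bie_expect_prod (f g : V → ℝ) :
    ∑ A ∈ univ.powerset, (∏ i ∈ A, f i) * (∏ i ∈ Aᶜ, g i) = ∏ i, (f i + g i) := by
  rw [Finset.prod_add]
  exact Finset.sum_congr rfl fun A _ => by rw [Finset.compl_eq_univ_sdiff]

lemma bie_sum_mu (q : V → ℝ) : ∑ A ∈ univ.powerset, bieMu q A = 1 := by
  unfold bieMu; rw [bie_expect_prod]; simp

lemma bieMu_nonneg (q : V → ℝ) (hq : ∀ i, 0 ≤ q i ∧ q i ≤ 1) (A : Finset V) : 0 ≤ bieMu q A := by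
  unfold bieMu
  exact mul_nonneg (Finset.prod_nonneg fun i _ => (hq i).1)
    (Finset.prod_nonneg fun i _ => by linarith [(hq i).2])

lemma bie_marg_out (q : V → ℝ) (i : V) :
    ∑ A ∈ univ.powerset, bieMu q A * (1 - bieChi A i) = 1 - q i := by
  have key : ∀ A : Finset V, bieMu q A * (1 - bieChi A i)
      = (∏ k ∈ A, (if k = i then 0 else q k)) * (∏ k ∈ Aᶜ, (1 - q k)) := by
    intro A
    by_cases h : i ∈ A
    · have hz : (∏ k ∈ A, (if k = i then (0:ℝ) else q k)) = 0 :=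
        Finset.prod_eq_zero h (if_pos rfl)
      rw [hz]; simp [bieChi, h]
    · have hp : (∏ k ∈ A, (if k = i then (0:ℝ) else q k)) = ∏ k ∈ A, q k := by
        apply Finset.prod_congr rfl
        intro k hk
        have hne : k ≠ i := fun e => h (e ▸ hk)
        simp [hne]
      rw [hp]; unfold bieMu bieChi; rw [if_neg h]; ring
  rw [Finset.sum_congr rfl fun A _ => key A, bie_expect_prod]
  rw [Finset.prod_eq_single i (fun k _ hk => by rw [if_neg hk]; ring) (by simp)]
  simp

lemma bie_marg_out_in (q : V → ℝ) {i j : V} (hij : i ≠ j) :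
    ∑ A ∈ univ.powerset, bieMu q A * ((1 - bieChi A i) * bieChi A j) = (1 - q i) * q j := by
  have key : ∀ A : Finset V, bieMu q A * ((1 - bieChi A i) * bieChi A j)
      = (∏ k ∈ A, (if k = i then 0 else q k)) * (∏ k ∈ Aᶜ, (if k = j then 0 else 1 - q k)) := by
    intro A
    by_cases hi : i ∈ A
    · have hz : (∏ k ∈ A, (if k = i then (0:ℝ) else q k)) = 0 :=
        Finset.prod_eq_zero hi (if_pos rfl)
      rw [hz]; simp [bieChi, hi]
    · by_cases hj : j ∈ A
      · have hp : (∏ k ∈ A, (if k = i then (0:ℝ) else q k)) = ∏ k ∈ A, q k := by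
          apply Finset.prod_congr rfl
          intro k hk
          have hne : k ≠ i := fun e => hi (e ▸ hk)
          simp [hne]
        have hp2 : (∏ k ∈ Aᶜ, (if k = j then (0:ℝ) else 1 - q k)) = ∏ k ∈ Aᶜ, (1 - q k) := by
          apply Finset.prod_congr rfl
          intro k hk
          have hne : k ≠ j := fun e => (Finset.mem_compl.1 hk) (e ▸ hj)
          simp [hne]
        rw [hp, hp2]; unfold bieMu bieChi; rw [if_neg hi, if_pos hj]; ring
      · have hz : (∏ k ∈ Aᶜ, (if k = j then (0:ℝ) else 1 - q k)) = 0 :=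
          Finset.prod_eq_zero (Finset.mem_compl.2 hj) (if_pos rfl)
        rw [hz]; simp [bieChi, hj]
  rw [Finset.sum_congr rfl fun A _ => key A, bie_expect_prod]
  rw [← Finset.mul_prod_erase univ _ (mem_univ i),
      ← Finset.mul_prod_erase _ _ (Finset.mem_erase.2 ⟨hij.symm, mem_univ j⟩)]
  have h1 : (∏ k ∈ (univ.erase i).erase j,
      ((if k = i then (0:ℝ) else q k) + (if k = j then 0 else 1 - q k))) = 1 := by
    apply Finset.prod_eq_one
    intro k hk
    have hkj : k ≠ j := (Finset.mem_erase.1 hk).1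
    have hki : k ≠ i := (Finset.mem_erase.1 (Finset.mem_erase.1 hk).2).1
    rw [if_neg hki, if_neg hkj]; ring
  rw [h1, if_pos rfl, if_pos rfl, if_neg hij, if_neg hij.symm]
  ring

lemma bie_marg_out_out (q : V → ℝ) {i j : V} (hij : i ≠ j) :
    ∑ A ∈ univ.powerset, bieMu q A * ((1 - bieChi A i) * (1 - bieChi A j)) = (1 - q i) * (1 - q j) := by
  have key : ∀ A : Finset V, bieMu q A * ((1 - bieChi A i) * (1 - bieChi A j))
      = (∏ k ∈ A, (if k = i ∨ k = j then 0 else q k)) * (∏ k ∈ Aᶜ, (1 - q k)) := by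
    intro A
    by_cases hi : i ∈ A
    · have hz : (∏ k ∈ A, (if k = i ∨ k = j then (0:ℝ) else q k)) = 0 :=
        Finset.prod_eq_zero hi (if_pos (Or.inl rfl))
      rw [hz]; simp [bieChi, hi]
    · by_cases hj : j ∈ A
      · have hz : (∏ k ∈ A, (if k = i ∨ k = j then (0:ℝ) else q k)) = 0 :=
          Finset.prod_eq_zero hj (if_pos (Or.inr rfl))
        rw [hz]; simp [bieChi, hj]
      · have hp : (∏ k ∈ A, (if k = i ∨ k = j then (0:ℝ) else q k)) = ∏ k ∈ A, q k := by
          apply Finset.prod_congr rfl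
          intro k hk
          have hne : ¬(k = i ∨ k = j) := by
            rintro (e | e)
            · exact hi (e ▸ hk)
            · exact hj (e ▸ hk)
          simp [hne]
        rw [hp]; unfold bieMu bieChi; rw [if_neg hi, if_neg hj]; ring
  rw [Finset.sum_congr rfl fun A _ => key A, bie_expect_prod]
  rw [← Finset.mul_prod_erase univ _ (mem_univ i),
      ← Finset.mul_prod_erase _ _ (Finset.mem_erase.2 ⟨hij.symm, mem_univ j⟩)]
  have h1 : (∏ k ∈ (univ.erase i).erase j,
      ((if k = i ∨ k = j then (0:ℝ) else q k) + (1 - q k))) = 1 := by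
    apply Finset.prod_eq_one
    intro k hk
    have hkj : k ≠ j := (Finset.mem_erase.1 hk).1
    have hki : k ≠ i := (Finset.mem_erase.1 (Finset.mem_erase.1 hk).2).1
    have hne : ¬(k = i ∨ k = j) := by rintro (e | e); exacts [hki e, hkj e]
    rw [if_neg hne]; ring
  rw [h1]
  have e1 : ((if i = i ∨ i = j then (0:ℝ) else q i) + (1 - q i)) = 1 - q i := by
    rw [if_pos (Or.inl rfl)]; ring
  have e2 : ((if j = i ∨ j = j then (0:ℝ) else q j) + (1 - q j)) = 1 - q j := by
    rw [if_pos (Or.inr rfl)]; ring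
  rw [e1, e2]; ring


lemma bie_sum_ite_univ (S : Finset V) (f : V → ℝ) :
    ∑ j ∈ S, f j = ∑ j, if j ∈ S then f j else 0 := by
  rw [Finset.sum_ite_mem, Finset.univ_inter]

lemma bie_ieRev_eq (w : V → V → ℝ) (A : Finset V) :
    ieRev w A (1/2) = (1/4) * ∑ i, ((1 - bieChi A i) * w i i)
      + ∑ i, ∑ j, (if i = j then 0 else
          ((1/4)*((1 - bieChi A i) * bieChi A j) + (1/16)*((1 - bieChi A i)*(1 - bieChi A j))) * w j i) := by
  unfold ieRev
  rw [bie_sum_ite_univ Aᶜ, Finset.mul_sum, Finset.mul_sum, ← Finset.sum_add_distrib]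
  apply Finset.sum_congr rfl
  intro i _
  by_cases hi : i ∈ A
  · have h1 : i ∉ Aᶜ := by simp [hi]
    rw [if_neg h1]
    have h2 : ∀ j ∈ (univ : Finset V), (if i = j then 0 else
        ((1/4)*((1 - bieChi A i) * bieChi A j) + (1/16)*((1 - bieChi A i)*(1 - bieChi A j))) * w j i) = 0 := by
      intro j _
      by_cases hij : i = j
      · rw [if_pos hij]
      · rw [if_neg hij]; simp [bieChi, hi]
    rw [Finset.sum_eq_zero h2]
    simp [bieChi, hi]
  · have h1 : i ∈ Aᶜ := by simp [hi]
    rw [if_pos h1]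
    have hbieChi : bieChi A i = 0 := by simp [bieChi, hi]
    rw [hbieChi]
    have hsum : (∑ j, (if i = j then 0 else
          ((1/4)*((1 - (0:ℝ)) * bieChi A j) + (1/16)*((1 - 0)*(1 - bieChi A j))) * w j i))
        = ∑ j, ((1/4)*(if j ∈ A then w j i else 0)
            + (1/16)*(if j ∈ Aᶜ \ {i} then w j i else 0)) := by
      apply Finset.sum_congr rfl
      intro j _
      by_cases hij : i = j
      · subst hij
        rw [if_pos rfl, if_neg hi]
        have h3 : i ∉ Aᶜ \ {i} := by simp
        rw [if_neg h3]; ring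
      · rw [if_neg hij]
        by_cases hj : j ∈ A
        · rw [if_pos hj]
          have h3 : j ∉ Aᶜ \ {i} := by simp [hj]
          rw [if_neg h3]
          simp only [bieChi, if_pos hj]; ring
        · rw [if_neg hj]
          have h3 : j ∈ Aᶜ \ {i} := by
            simp only [Finset.mem_sdiff, Finset.mem_compl, Finset.mem_singleton]
            exact ⟨hj, fun e => hij e.symm⟩
          rw [if_pos h3]
          simp only [bieChi, if_neg hj]; ring
    rw [hsum, Finset.sum_add_distrib, ← Finset.mul_sum, ← Finset.mul_sum,
        ← bie_sum_ite_univ A (fun j => w j i), ← bie_sum_ite_univ (Aᶜ \ {i}) (fun j => w j i)]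
    ring


lemma bie_dieRev_eq (w : V → V → ℝ) (A : Finset V) :
    dieRev w A (1/2) = ∑ j, ∑ i, (if i = j then 0 else
          ((1/4)*(bieChi A i * (1 - bieChi A j)) + (1/16)*((1 - bieChi A i)*(1 - bieChi A j))) * w i j) := by
  unfold dieRev
  rw [bie_sum_ite_univ Aᶜ, Finset.mul_sum]
  apply Finset.sum_congr rfl
  intro j _
  by_cases hj : j ∈ A
  · have h1 : j ∉ Aᶜ := by simp [hj]
    rw [if_neg h1]
    have h2 : ∀ i ∈ (univ : Finset V), (if i = j then 0 else
        ((1/4)*(bieChi A i * (1 - bieChi A j)) + (1/16)*((1 - bieChi A i)*(1 - bieChi A j))) * w i j) = 0 := by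
      intro i _
      by_cases hij : i = j
      · rw [if_pos hij]
      · rw [if_neg hij]; simp [bieChi, hj]
    rw [Finset.sum_eq_zero h2]
    simp
  · have h1 : j ∈ Aᶜ := by simp [hj]
    rw [if_pos h1]
    have hbieChi : bieChi A j = 0 := by simp [bieChi, hj]
    rw [hbieChi]
    have hsum : (∑ i, (if i = j then 0 else
          ((1/4)*(bieChi A i * (1 - (0:ℝ))) + (1/16)*((1 - bieChi A i)*(1 - 0))) * w i j))
        = ∑ i, ((1/4)*(if i ∈ A then w i j else 0)
            + (1/16)*(if i ∈ Aᶜ \ {j} then w i j else 0)) := by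
      apply Finset.sum_congr rfl
      intro i _
      by_cases hij : i = j
      · subst hij
        rw [if_pos rfl, if_neg hj]
        have h3 : i ∉ Aᶜ \ {i} := by simp
        rw [if_neg h3]; ring
      · rw [if_neg hij]
        by_cases hi : i ∈ A
        · rw [if_pos hi]
          have h3 : i ∉ Aᶜ \ {j} := by simp [hi]
          rw [if_neg h3]
          simp only [bieChi, if_pos hi]; ring
        · rw [if_neg hi]
          have h3 : i ∈ Aᶜ \ {j} := by
            simp only [Finset.mem_sdiff, Finset.mem_compl, Finset.mem_singleton]
            exact ⟨hi, hij⟩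
          rw [if_pos h3]
          simp only [bieChi, if_neg hi]; ring
    rw [hsum, Finset.sum_add_distrib, ← Finset.mul_sum, ← Finset.mul_sum,
        ← bie_sum_ite_univ A (fun i => w i j), ← bie_sum_ite_univ (Aᶜ \ {j}) (fun i => w i j)]
    ring


lemma bie_revenue_eq (w : V → V → ℝ) (π : V ≃ Fin (Fintype.card V)) (p : V → ℝ) :
    revenue w π p = ∑ j, (p j * (1 - p j) * w j j)
      + ∑ j, ∑ i, (if π i < π j then p i * (p j * (1 - p j)) * w i j else 0) := by
  unfold revenue
  rw [← Finset.sum_add_distrib]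
  apply Finset.sum_congr rfl
  intro j _
  rw [Finset.sum_filter, mul_add, Finset.mul_sum]
  congr 1
  apply Finset.sum_congr rfl
  intro i _
  by_cases h : π i < π j
  · rw [if_pos h, if_pos h]; ring
  · rw [if_neg h, if_neg h]; ring

lemma bie_exp_ie (q : V → ℝ) (w : V → V → ℝ) :
    ∑ A ∈ univ.powerset, bieMu q A * ieRev w A (1/2)
      = (1/4) * ∑ i, ((1 - q i) * w i i)
        + ∑ i, ∑ j, (if i = j then 0 else
            ((1/4)*((1 - q i) * q j) + (1/16)*((1 - q i)*(1 - q j))) * w j i) := by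
  have step : ∀ A ∈ univ.powerset, bieMu q A * ieRev w A (1/2)
      = (1/4) * ∑ i, (bieMu q A * ((1 - bieChi A i) * w i i))
        + ∑ i, ∑ j, (if i = j then 0 else
            ((1/4)*(bieMu q A * ((1 - bieChi A i) * bieChi A j))
              + (1/16)*(bieMu q A * ((1 - bieChi A i)*(1 - bieChi A j)))) * w j i) := by
    intro A _
    rw [bie_ieRev_eq, mul_add]
    congr 1
    · rw [mul_left_comm, Finset.mul_sum]
    · rw [Finset.mul_sum]
      apply Finset.sum_congr rfl
      intro i _
      rw [Finset.mul_sum]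
      apply Finset.sum_congr rfl
      intro j _
      by_cases hij : i = j
      · rw [if_pos hij, if_pos hij]; ring
      · rw [if_neg hij, if_neg hij]; ring
  rw [Finset.sum_congr rfl step]
  rw [Finset.sum_add_distrib]
  congr 1
  · rw [← Finset.mul_sum, Finset.sum_comm, Finset.mul_sum, Finset.mul_sum]
    apply Finset.sum_congr rfl
    intro i _
    have harr : ∀ A ∈ univ.powerset,
        bieMu q A * ((1 - bieChi A i) * w i i) = (bieMu q A * (1 - bieChi A i)) * w i i := by
      intro A _; ring
    rw [Finset.sum_congr rfl harr, ← Finset.sum_mul, bie_marg_out]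
  · rw [Finset.sum_comm]
    apply Finset.sum_congr rfl
    intro i _
    rw [Finset.sum_comm]
    apply Finset.sum_congr rfl
    intro j _
    by_cases hij : i = j
    · simp [if_pos hij]
    · rw [if_neg hij]
      have expand : ∀ A ∈ univ.powerset,
          (if i = j then 0 else ((1/4)*(bieMu q A * ((1 - bieChi A i) * bieChi A j))
              + (1/16)*(bieMu q A * ((1 - bieChi A i)*(1 - bieChi A j)))) * w j i)
          = (bieMu q A * ((1 - bieChi A i) * bieChi A j)) * ((1/4) * w j i)
            + (bieMu q A * ((1 - bieChi A i)*(1 - bieChi A j))) * ((1/16) * w j i) := by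
        intro A _
        rw [if_neg hij]; ring
      rw [Finset.sum_congr rfl expand, Finset.sum_add_distrib,
          ← Finset.sum_mul, ← Finset.sum_mul, bie_marg_out_in q hij, bie_marg_out_out q hij]
      ring

lemma bie_exp_die (q : V → ℝ) (w : V → V → ℝ) :
    ∑ A ∈ univ.powerset, bieMu q A * dieRev w A (1/2)
      = ∑ j, ∑ i, (if i = j then 0 else
            ((1/4)*(q i * (1 - q j)) + (1/16)*((1 - q i)*(1 - q j))) * w i j) := by
  have step : ∀ A ∈ univ.powerset, bieMu q A * dieRev w A (1/2)
      = ∑ j, ∑ i, (if i = j then 0 else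
            ((1/4)*(bieMu q A * ((1 - bieChi A j) * bieChi A i))
              + (1/16)*(bieMu q A * ((1 - bieChi A j)*(1 - bieChi A i)))) * w i j) := by
    intro A _
    rw [bie_dieRev_eq, Finset.mul_sum]
    apply Finset.sum_congr rfl
    intro j _
    rw [Finset.mul_sum]
    apply Finset.sum_congr rfl
    intro i _
    by_cases hij : i = j
    · rw [if_pos hij, if_pos hij]; ring
    · rw [if_neg hij, if_neg hij]; ring
  rw [Finset.sum_congr rfl step, Finset.sum_comm]
  apply Finset.sum_congr rfl
  intro j _
  rw [Finset.sum_comm]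
  apply Finset.sum_congr rfl
  intro i _
  by_cases hij : i = j
  · simp [if_pos hij]
  · rw [if_neg hij]
    have hji : j ≠ i := fun e => hij e.symm
    have expand : ∀ A ∈ univ.powerset,
        (if i = j then 0 else ((1/4)*(bieMu q A * ((1 - bieChi A j) * bieChi A i))
            + (1/16)*(bieMu q A * ((1 - bieChi A j)*(1 - bieChi A i)))) * w i j)
        = (bieMu q A * ((1 - bieChi A j) * bieChi A i)) * ((1/4) * w i j)
          + (bieMu q A * ((1 - bieChi A j)*(1 - bieChi A i))) * ((1/16) * w i j) := by
      intro A _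
      rw [if_neg hij]; ring
    rw [Finset.sum_congr rfl expand, Finset.sum_add_distrib,
        ← Finset.sum_mul, ← Finset.sum_mul, bie_marg_out_in q hji, bie_marg_out_out q hji]
    ring

lemma bie_double_sym (f : V → V → ℝ) :
    ∑ i, ∑ j, (f i j + f j i) = 2 * ∑ i, ∑ j, f i j := by
  have h : ∀ i ∈ (univ : Finset V), (∑ j, (f i j + f j i)) = (∑ j, f i j) + ∑ j, f j i :=
    fun i _ => Finset.sum_add_distrib
  rw [Finset.sum_congr rfl h, Finset.sum_add_distrib,
    show (∑ i, ∑ j, f j i) = ∑ i, ∑ j, f i j from Finset.sum_comm]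
  ring

lemma bie_sym_bound (c : ℝ) (L R : V → V → ℝ) (key : ∀ i j, c * (R i j + R j i) ≤ L i j + L j i) :
    c * (∑ j, ∑ i, R i j) ≤ ∑ i, ∑ j, L i j := by
  have h2 : ∑ i, ∑ j, (c*(R i j + R j i)) ≤ ∑ i, ∑ j, (L i j + L j i) :=
    Finset.sum_le_sum fun i _ => Finset.sum_le_sum fun j _ => key i j
  have e1 : ∑ i, ∑ j, (c*(R i j + R j i)) = c * (2 * ∑ i, ∑ j, R i j) := by
    simp only [← Finset.mul_sum]; rw [bie_double_sym]
  have e2 := bie_double_sym L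
  have e3 : (∑ j, ∑ i, R i j) = ∑ i, ∑ j, R i j := Finset.sum_comm
  rw [e3]
  linarith

/-- Core bound, undirected case: any marketing strategy is beaten (up to factor) by
the best IE set. -/
lemma bie_und_core (w : V → V → ℝ) (hsym : ∀ i j, w i j = w j i) (hw : ∀ i j, 0 ≤ w i j)
    (A : Finset V) (hAmax : ∀ B ∈ univ.powerset, ieRev w B (1/2) ≤ ieRev w A (1/2))
    (π : V ≃ Fin (Fintype.card V)) (p : V → ℝ) (hp : ∀ i, 1/2 ≤ p i ∧ p i ≤ 1) :
    (8857/10000) * revenue w π p ≤ ieRev w A (1/2) := by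
  have hbd : ∀ i, 0 ≤ bieQ (p i) ∧ bieQ (p i) ≤ 1 := fun i => bieQ_bounds (hp i).1 (hp i).2
  have hmid : (8857/10000) * revenue w π p
      ≤ ∑ B ∈ univ.powerset, bieMu (fun i => bieQ (p i)) B * ieRev w B (1/2) := by
    rw [bie_exp_ie (fun i => bieQ (p i)) w, bie_revenue_eq w π p, mul_add]
    apply add_le_add
    · rw [Finset.mul_sum, Finset.mul_sum]
      apply Finset.sum_le_sum
      intro i _
      have h1 := bieQ_node (hp i).1 (hp i).2
      have h2 := mul_le_mul_of_nonneg_right h1 (hw i i)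
      linarith
    · apply bie_sym_bound (8857/10000)
        (fun i j => (if i = j then 0 else
          ((1/4)*((1 - bieQ (p i)) * bieQ (p j)) + (1/16)*((1 - bieQ (p i))*(1 - bieQ (p j)))) * w j i))
        (fun i j => (if π i < π j then p i * (p j * (1 - p j)) * w i j else 0))
      intro i j
      by_cases hij : i = j
      · subst hij
        simp [lt_irrefl]
      · rw [if_neg hij, if_neg (Ne.symm hij)]
        rcases lt_trichotomy (π i) (π j) with h | h | h
        · rw [if_pos h, if_neg (asymm h)]
          have hedge := bieQ_edge (hp i).1 (hp i).2 (hp j).1 (hp j).2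
          rw [hsym j i]
          have h2 := mul_le_mul_of_nonneg_right hedge (hw i j)
          linarith
        · exact absurd (π.injective h) hij
        · rw [if_neg (asymm h), if_pos h]
          have hedge := bieQ_edge (hp j).1 (hp j).2 (hp i).1 (hp i).2
          rw [hsym j i]
          have h2 := mul_le_mul_of_nonneg_right hedge (hw i j)
          linarith
  calc (8857/10000) * revenue w π p
      ≤ ∑ B ∈ univ.powerset, bieMu (fun i => bieQ (p i)) B * ieRev w B (1/2) := hmid
    _ ≤ ∑ B ∈ univ.powerset, bieMu (fun i => bieQ (p i)) B * ieRev w A (1/2) :=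
        Finset.sum_le_sum fun B hB =>
          mul_le_mul_of_nonneg_left (hAmax B hB) (bieMu_nonneg _ hbd B)
    _ = ieRev w A (1/2) := by rw [← Finset.sum_mul, bie_sum_mu]; ring

/-- Core bound, directed case. -/
lemma bie_dir_core (w : V → V → ℝ) (hw : ∀ i j, 0 ≤ w i j) (hdiag : ∀ i, w i i = 0)
    (A : Finset V) (hAmax : ∀ B ∈ univ.powerset, dieRev w B (1/2) ≤ dieRev w A (1/2))
    (π : V ≃ Fin (Fintype.card V)) (p : V → ℝ) (hp : ∀ i, 1/2 ≤ p i ∧ p i ≤ 1) :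
    (4594/10000) * revenue w π p ≤ dieRev w A (1/2) := by
  have hbd : ∀ i, 0 ≤ bieQD (p i) ∧ bieQD (p i) ≤ 1 := fun i => bieQD_bounds (hp i).1 (hp i).2
  have hmid : (4594/10000) * revenue w π p
      ≤ ∑ B ∈ univ.powerset, bieMu (fun i => bieQD (p i)) B * dieRev w B (1/2) := by
    rw [bie_exp_die (fun i => bieQD (p i)) w, bie_revenue_eq w π p]
    have hz : (∑ j, (p j * (1 - p j) * w j j)) = 0 :=
      Finset.sum_eq_zero fun j _ => by rw [hdiag j]; ring
    rw [hz, zero_add, Finset.mul_sum]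
    apply Finset.sum_le_sum
    intro j _
    rw [Finset.mul_sum]
    apply Finset.sum_le_sum
    intro i _
    by_cases hij : i = j
    · subst hij
      simp [lt_irrefl]
    · rw [if_neg hij]
      by_cases h : π i < π j
      · rw [if_pos h]
        have hedge := bieQD_edge (hp i).1 (hp i).2 (hp j).1 (hp j).2
        have h2 := mul_le_mul_of_nonneg_right hedge (hw i j)
        linarith
      · rw [if_neg h]
        have c1 : 0 ≤ bieQD (p i) := (hbd i).1
        have c2 : 0 ≤ 1 - bieQD (p j) := by linarith [(hbd j).2]
        have c3 : 0 ≤ 1 - bieQD (p i) := by linarith [(hbd i).2]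
        have : 0 ≤ ((1/4)*(bieQD (p i) * (1 - bieQD (p j)))
            + (1/16)*((1 - bieQD (p i))*(1 - bieQD (p j)))) * w i j := by
          apply mul_nonneg _ (hw i j)
          have := mul_nonneg c1 c2
          have := mul_nonneg c3 c2
          linarith
        linarith
  calc (4594/10000) * revenue w π p
      ≤ ∑ B ∈ univ.powerset, bieMu (fun i => bieQD (p i)) B * dieRev w B (1/2) := hmid
    _ ≤ ∑ B ∈ univ.powerset, bieMu (fun i => bieQD (p i)) B * dieRev w A (1/2) :=
        Finset.sum_le_sum fun B hB =>
          mul_le_mul_of_nonneg_left (hAmax B hB) (bieMu_nonneg _ hbd B)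
    _ = dieRev w A (1/2) := by rw [← Finset.sum_mul, bie_sum_mu]; ring

end RandomSubset

/-- The best IE strategy with the myopic pricing probability `1/2` extracts at least a
`0.8857` fraction of the maximum revenue of any undirected social network, and at least
a `0.4594` fraction of the maximum revenue of any directed social network. -/
theorem bestIE_myopic :
    (∀ (V : Type) [Fintype V] [DecidableEq V] (w : V → V → ℝ),
        (∀ i j, w i j = w j i) → (∀ i j, 0 ≤ w i j) →
        ∃ A : Finset V, ieRev w A (1/2) ≥ 0.8857 * maxRev w) ∧
      ∀ (V : Type) [Fintype V] [DecidableEq V] (w : V → V → ℝ),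
        (∀ i j, 0 ≤ w i j) → (∀ i, w i i = 0) →
        ∃ A : Finset V, dieRev w A (1/2) ≥ 0.4594 * maxRev w := by
  constructor
  · intro V _ _ w hsym hw
    obtain ⟨A, -, hAmax⟩ :=
      Finset.exists_max_image (univ.powerset) (fun B => ieRev w B (1/2)) ⟨∅, by simp⟩
    refine ⟨A, ?_⟩
    have hcore : ∀ r ∈ {r | ∃ (π : V ≃ Fin (Fintype.card V)) (p : V → ℝ),
        (∀ i, 1/2 ≤ p i ∧ p i ≤ 1) ∧ r = revenue w π p},
        r ≤ (10000/8857) * ieRev w A (1/2) := by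
      rintro r ⟨π, p, hp, rfl⟩
      have := bie_und_core w hsym hw A hAmax π p hp
      linarith
    have hne : Set.Nonempty {r | ∃ (π : V ≃ Fin (Fintype.card V)) (p : V → ℝ),
        (∀ i, 1/2 ≤ p i ∧ p i ≤ 1) ∧ r = revenue w π p} :=
      ⟨revenue w (Fintype.equivFin V) (fun _ => 1/2),
        Fintype.equivFin V, fun _ => 1/2, fun i => by norm_num, rfl⟩
    have hs : maxRev w ≤ (10000/8857) * ieRev w A (1/2) := csSup_le hne hcore
    rw [ge_iff_le, show (0.8857 : ℝ) = 8857/10000 by norm_num]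
    nlinarith [hs]
  · intro V _ _ w hw hdiag
    obtain ⟨A, -, hAmax⟩ :=
      Finset.exists_max_image (univ.powerset) (fun B => dieRev w B (1/2)) ⟨∅, by simp⟩
    refine ⟨A, ?_⟩
    have hcore : ∀ r ∈ {r | ∃ (π : V ≃ Fin (Fintype.card V)) (p : V → ℝ),
        (∀ i, 1/2 ≤ p i ∧ p i ≤ 1) ∧ r = revenue w π p},
        r ≤ (10000/4594) * dieRev w A (1/2) := by
      rintro r ⟨π, p, hp, rfl⟩
      have := bie_dir_core w hw hdiag A hAmax π p hp
      linarith
    have hne : Set.Nonempty {r | ∃ (π : V ≃ Fin (Fintype.card V)) (p : V → ℝ),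
        (∀ i, 1/2 ≤ p i ∧ p i ≤ 1) ∧ r = revenue w π p} :=
      ⟨revenue w (Fintype.equivFin V) (fun _ => 1/2),
        Fintype.equivFin V, fun _ => 1/2, fun i => by norm_num, rfl⟩
    have hs : maxRev w ≤ (10000/4594) * dieRev w A (1/2) := csSup_le hne hcore
    rw [ge_iff_le, show (0.4594 : ℝ) = 4594/10000 by norm_num]
    nlinarith [hs]
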